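/- For every finite simple graph G, |corona(G)| + |core(G)| ≤ 2·α(G) + k, where k is the number of odd cycles in G. -/

import Mathlib

variable {V : Type*} [Fintype V] [DecidableEq V]

/-- `S` is an independent set of `G`. -/
def IsIndep (G : SimpleGraph V) (S : Set V) : Prop :=
  ∀ ⦃u⦄, u ∈ S → ∀ ⦃v⦄, v ∈ S → ¬ G.Adj u v

/-- The independence number `α(G)`: the maximum cardinality of an independent set. -/
noncomputable def indepNum (G : SimpleGraph V) : ℕ :=
  sSup {n : ℕ | ∃ S : Set V, IsIndep G S ∧ S.ncard = n}

/-- `S` is a maximum independent set of `G`. -/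
def IsMaxIndep (G : SimpleGraph V) (S : Set V) : Prop :=
  IsIndep G S ∧ ∀ T : Set V, IsIndep G T → T.ncard ≤ S.ncard

/-- The neighborhood `N(X)` of a set of vertices `X`. -/
def nbhdSet (G : SimpleGraph V) (X : Set V) : Set V :=
  {v | ∃ u ∈ X, G.Adj u v}

/-- The difference `d_G(X) = |X| - |N(X)|` of a vertex set `X`. -/
noncomputable def diffSet (G : SimpleGraph V) (X : Set V) : ℤ :=
  (X.ncard : ℤ) - ((nbhdSet G X).ncard : ℤ)

/-- `I` is a critical independent set of `G`. -/
def IsCriticalIndep (G : SimpleGraph V) (I : Set V) : Prop :=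
  IsIndep G I ∧ ∀ J : Set V, IsIndep G J → diffSet G J ≤ diffSet G I

/-- `I` is a maximum-cardinality critical independent set of `G`. -/
def IsMaxCriticalIndep (G : SimpleGraph V) (I : Set V) : Prop :=
  IsCriticalIndep G I ∧ ∀ J : Set V, IsCriticalIndep G J → J.ncard ≤ I.ncard

/-- `core(G)`: the intersection of all maximum independent sets of `G`. -/
def coreSet (G : SimpleGraph V) : Set V := ⋂₀ {S : Set V | IsMaxIndep G S}

/-- `corona(G)`: the union of all maximum independent sets of `G`. -/
def coronaSet (G : SimpleGraph V) : Set V := ⋃₀ {S : Set V | IsMaxIndep G S}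

/-- `ker(G)`: the intersection of all critical independent sets of `G`. -/
def kerSet (G : SimpleGraph V) : Set V := ⋂₀ {S : Set V | IsCriticalIndep G S}

/-- `diadem(G)`: the union of all critical independent sets of `G`. -/
def diademSet (G : SimpleGraph V) : Set V := ⋃₀ {S : Set V | IsCriticalIndep G S}

/-- `nucleus(G)`: the intersection of all maximum-cardinality critical independent
sets of `G`. -/
def nucleusSet (G : SimpleGraph V) : Set V := ⋂₀ {S : Set V | IsMaxCriticalIndep G S}

/-- `C` is the vertex set of some odd cycle of `G`. -/
def IsOddCycleVertexSet (G : SimpleGraph V) (C : Set V) : Prop :=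
  ∃ (v : V) (w : G.Walk v v), w.IsCycle ∧ Odd w.length ∧ {x | x ∈ w.support} = C

/-- The maximum cardinality of a set of pairwise vertex-distinct odd cycles of `G`,
i.e. the number of distinct vertex sets of odd cycles of `G`. -/
noncomputable def numVertexDistinctOddCycles (G : SimpleGraph V) : ℕ :=
  {C : Set V | IsOddCycleVertexSet G C}.ncard

/-- `E` is the edge set of some odd cycle of `G`. -/
def IsOddCycleEdgeSet (G : SimpleGraph V) (E : Set (Sym2 V)) : Prop :=
  ∃ (v : V) (w : G.Walk v v), w.IsCycle ∧ Odd w.length ∧ {e | e ∈ w.edges} = E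

/-- The number of (distinct) odd cycles of `G`, where a cycle is identified with
its edge set. -/
noncomputable def numOddCycles (G : SimpleGraph V) : ℕ :=
  {E : Set (Sym2 V) | IsOddCycleEdgeSet G E}.ncard
/-! Fix a maximum independent set `S`. Since `core(G) ⊆ S ⊆ corona(G)`, it suffices to show
`|corona(G) \ S| ≤ |S \ core(G)| + k`. No vertex of the corona is adjacent to the core, so
exchanging shows that every independent `Z ⊆ corona(G) \ S` has at least `|Z|` neighbours in
`S \ core(G)`: Hall's condition holds for independent sets. A minimal set violating Hall's
condition therefore contains an edge `uv`, and its minimality makes `u` and `v` connected in the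
bipartite graph between it and its neighbours; that even path closes with `uv` to an odd cycle
through `u`. Deleting `u` and inducting, every vertex lost from the Hall bound is paid for by a
distinct odd cycle. -/

namespace SimpleGraph

variable {α : Type*} {G : SimpleGraph α} {s t : Set α}

theorem IsBipartiteWith.even_length_of_mem_left (h : G.IsBipartiteWith s t) {u v : α}
    (p : G.Walk u v) (hu : u ∈ s) (hv : v ∈ s) : Even p.length := by
  classical
  have hnot : ∀ {x}, x ∈ s → x ∉ t := fun hx => Set.disjoint_left.mp h.disjoint hx
  let c : G.Coloring Bool := Coloring.mk (fun x => decide (x ∈ t)) fun hxy => by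
    rcases h.mem_of_adj hxy with ⟨hx, hy⟩ | ⟨hx, hy⟩ <;> simp [hx, hy, hnot]
  rw [c.even_length_iff_congr p]
  show decide (u ∈ t) = true ↔ decide (v ∈ t) = true
  simp [hnot hu, hnot hv]

theorem exists_odd_isCycle_of_reachable_between (hst : Disjoint s t) {u v : α} (huv : G.Adj u v)
    (hu : u ∈ s) (hv : v ∈ s) (hreach : (G.between s t).Reachable v u) :
    ∃ c : G.Walk u u, c.IsCycle ∧ Odd c.length ∧ ∀ x ∈ c.support, x ∈ s ∪ t := by
  classical
  have hB := between_isBipartiteWith (G := G) hst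
  obtain ⟨p, hp⟩ := hreach.some.toPath
  have huv_notMem : s(u, v) ∉ p.edges := fun he =>
    Set.disjoint_left.mp hst hv (hB.mem_of_mem_adj hu (p.adj_of_mem_edges he))
  refine ⟨.cons huv (p.mapLe between_le), ?_, ?_, ?_⟩
  · rw [Walk.cons_isCycle_iff, Walk.edges_mapLe_eq_edges]
    exact ⟨hp.mapLe between_le, huv_notMem⟩
  · rw [Walk.length_cons, Walk.length_mapLe]
    exact (hB.even_length_of_mem_left p hv hu).add_one
  · intro x hx
    rw [Walk.support_cons, Walk.support_mapLe_eq_support, List.mem_cons] at hx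
    rcases hx with rfl | hx
    · exact Or.inl hu
    · exact isBipartiteWith_support_subset hB
        (mem_support_of_mem_walk_support p (Walk.not_nil_of_ne huv.ne.symm) hx)

end SimpleGraph

open Set

section

variable {α : Type*} {G : SimpleGraph α}

theorem IsIndep.mono {s t : Set α} (ht : IsIndep G t) (hst : s ⊆ t) : IsIndep G s :=
  fun _ hu _ hv => ht (hst hu) (hst hv)

theorem IsIndep.union {s t : Set α} (hs : IsIndep G s) (ht : IsIndep G t)
    (hst : ∀ u ∈ s, ∀ v ∈ t, ¬ G.Adj u v) : IsIndep G (s ∪ t) := by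
  rintro u (hu | hu) v (hv | hv) huv
  · exact hs hu hv huv
  · exact hst u hu v hv huv
  · exact hst v hv u hu huv.symm
  · exact ht hu hv huv

theorem nbhdSet_mono {X Y : Set α} (h : X ⊆ Y) : nbhdSet G X ⊆ nbhdSet G Y :=
  fun _ ⟨u, hu, huv⟩ => ⟨u, h hu, huv⟩

theorem exists_isMaxIndep_ncard_eq_indepNum [Finite α] (G : SimpleGraph α) :
    ∃ S, IsMaxIndep G S ∧ S.ncard = indepNum G := by
  have hne : {n : ℕ | ∃ S : Set α, IsIndep G S ∧ S.ncard = n}.Nonempty :=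
    ⟨0, ∅, fun _ hu => absurd hu (notMem_empty _), ncard_empty α⟩
  have hbdd : BddAbove {n : ℕ | ∃ S : Set α, IsIndep G S ∧ S.ncard = n} :=
    ⟨Nat.card α, by rintro _ ⟨S, -, rfl⟩; exact ncard_le_card S⟩
  obtain ⟨S, hS, hSα⟩ := Nat.sSup_mem hne hbdd
  exact ⟨S, ⟨hS, fun T hT => hSα ▸ le_csSup hbdd ⟨T, hT, rfl⟩⟩, hSα⟩

theorem not_adj_of_mem_coronaSet_of_mem_coreSet {u v : α} (hu : u ∈ coronaSet G)
    (hv : v ∈ coreSet G) : ¬ G.Adj u v := by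
  obtain ⟨S, hS, huS⟩ := mem_sUnion.mp hu
  exact hS.1 huS (mem_sInter.mp hv S hS)

/-- Exchanging these neighbours for `Z` keeps `S` independent, since the core has no neighbour in
the corona. -/
theorem IsMaxIndep.ncard_le_ncard_nbhdSet_inter [Finite α] {S Z : Set α} (hS : IsMaxIndep G S)
    (hZ : Z ⊆ coronaSet G \ S) (hZi : IsIndep G Z) :
    Z.ncard ≤ (nbhdSet G Z ∩ (S \ coreSet G)).ncard := by
  set Y := nbhdSet G Z ∩ (S \ coreSet G)
  have hT : IsIndep G ((S \ Y) ∪ Z) := by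
    refine (hS.1.mono sdiff_subset).union hZi fun s hs z hz hsz => ?_
    by_cases hcore : s ∈ coreSet G
    · exact not_adj_of_mem_coronaSet_of_mem_coreSet (hZ hz).1 hcore hsz.symm
    · exact hs.2 ⟨⟨z, hz, hsz.symm⟩, hs.1, hcore⟩
  have hdisj : Disjoint (S \ Y) Z :=
    disjoint_left.mpr fun _ hx hxZ => (hZ hxZ).2 hx.1
  have hT_card := ncard_union_eq hdisj
  have hS_card := ncard_sdiff_add_ncard_of_subset (show Y ⊆ S from fun _ hy => hy.2.1)
  have := hS.2 _ hT
  omega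

def oddCycleEdgeSetsWithin (G : SimpleGraph α) (X : Set α) : Set (Set (Sym2 α)) :=
  {E | ∃ (v : α) (w : G.Walk v v), w.IsCycle ∧ Odd w.length ∧ {e | e ∈ w.edges} = E ∧
    ∀ x ∈ w.support, x ∈ X}

theorem oddCycleEdgeSetsWithin_mono {X Y : Set α} (h : X ⊆ Y) :
    oddCycleEdgeSetsWithin G X ⊆ oddCycleEdgeSetsWithin G Y :=
  fun _ ⟨v, w, hc, hodd, hE, hX⟩ => ⟨v, w, hc, hodd, hE, fun x hx => h (hX x hx)⟩

theorem ncard_oddCycleEdgeSetsWithin_le_numOddCycles [Finite α] (G : SimpleGraph α) (X : Set α) :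
    (oddCycleEdgeSetsWithin G X).ncard ≤ numOddCycles G :=
  ncard_le_ncard fun _ ⟨v, w, hc, hodd, hE, _⟩ => ⟨v, w, hc, hodd, hE⟩

theorem ncard_oddCycleEdgeSetsWithin_sdiff_singleton_lt [Finite α] {X : Set α} {u : α}
    (c : G.Walk u u) (hc : c.IsCycle) (hodd : Odd c.length) (hX : ∀ x ∈ c.support, x ∈ X) :
    (oddCycleEdgeSetsWithin G (X \ {u})).ncard < (oddCycleEdgeSetsWithin G X).ncard := by
  refine ncard_lt_ncard ⟨oddCycleEdgeSetsWithin_mono sdiff_subset, fun hsub => ?_⟩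
  obtain ⟨_, w', -, -, hE, hX'⟩ := hsub ⟨u, c, hc, hodd, rfl, hX⟩
  cases c with
  | nil => exact SimpleGraph.Walk.not_isCycle_nil hc
  | @cons _ y _ h p =>
    have hedge : s(u, y) ∈ w'.edges := (Set.ext_iff.mp hE _).mpr List.mem_cons_self
    exact (hX' u (w'.fst_mem_support_of_mem_edges hedge)).2 rfl

section Hall

open SimpleGraph

variable [Finite α] {R Z : Set α}

/-- Otherwise the two parts of `Z` would each satisfy Hall's condition, with disjoint
neighbourhoods. -/
theorem between_reachable_of_minimal_deficient
    (hdef : (nbhdSet G Z ∩ R).ncard < Z.ncard)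
    (hmin : ∀ W ⊂ Z, W.ncard ≤ (nbhdSet G W ∩ R).ncard) {u v : α} (hu : u ∈ Z) (hv : v ∈ Z) :
    (G.between Z (nbhdSet G Z ∩ R)).Reachable u v := by
  by_contra hnot
  set Y := nbhdSet G Z ∩ R
  set Z₁ := {z ∈ Z | (G.between Z Y).Reachable u z}
  have hZ₁ : Z₁ ⊂ Z := ⟨sep_subset _ _, fun h => hnot (h hv).2⟩
  have hZ₂ : Z \ Z₁ ⊂ Z := ⟨sdiff_subset, fun h => (h hu).2 ⟨hu, Reachable.refl u⟩⟩
  have hdisj : Disjoint (nbhdSet G Z₁ ∩ R) (nbhdSet G (Z \ Z₁) ∩ R) := by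
    refine disjoint_left.mpr ?_
    rintro y ⟨⟨a, ha, hay⟩, hyR⟩ ⟨⟨b, hb, hby⟩, -⟩
    have hyY : y ∈ Y := ⟨⟨a, ha.1, hay⟩, hyR⟩
    have hay' : (G.between Z Y).Adj a y := between_adj.mpr ⟨hay, Or.inl ⟨ha.1, hyY⟩⟩
    have hyb' : (G.between Z Y).Adj y b := between_adj.mpr ⟨hby.symm, Or.inr ⟨hyY, hb.1⟩⟩
    exact hb.2 ⟨hb.1, ha.2.trans (hay'.reachable.trans hyb'.reachable)⟩
  have hsub : (nbhdSet G Z₁ ∩ R) ∪ (nbhdSet G (Z \ Z₁) ∩ R) ⊆ Y :=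
    union_subset (inter_subset_inter_left _ (nbhdSet_mono hZ₁.subset))
      (inter_subset_inter_left _ (nbhdSet_mono hZ₂.subset))
  have h₁ := hmin _ hZ₁
  have h₂ := hmin _ hZ₂
  have hY := ncard_le_ncard hsub
  have hunion := ncard_union_eq hdisj
  have hZ := ncard_sdiff_add_ncard_of_subset hZ₁.subset
  omega

theorem exists_odd_isCycle_of_minimal_deficient (hZR : Disjoint Z R) (hZi : ¬ IsIndep G Z)
    (hdef : (nbhdSet G Z ∩ R).ncard < Z.ncard)
    (hmin : ∀ W ⊂ Z, W.ncard ≤ (nbhdSet G W ∩ R).ncard) :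
    ∃ u ∈ Z, ∃ c : G.Walk u u, c.IsCycle ∧ Odd c.length ∧ ∀ x ∈ c.support, x ∈ Z ∪ R := by
  obtain ⟨u, hu, v, hv, huv⟩ : ∃ u ∈ Z, ∃ v ∈ Z, G.Adj u v := by
    simpa [IsIndep] using hZi
  have hdisj : Disjoint Z (nbhdSet G Z ∩ R) := hZR.mono_right inter_subset_right
  obtain ⟨c, hc, hodd, hsupp⟩ := exists_odd_isCycle_of_reachable_between hdisj huv hu hv
    (between_reachable_of_minimal_deficient hdef hmin hv hu)
  exact ⟨u, hu, c, hc, hodd, fun x hx =>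
    (hsupp x hx).imp_right fun hx => hx.2⟩

theorem ncard_le_ncard_add_ncard_oddCycleEdgeSetsWithin {L : Set α} (hLR : Disjoint L R)
    (hall : ∀ Z ⊆ L, IsIndep G Z → Z.ncard ≤ (nbhdSet G Z ∩ R).ncard) :
    L.ncard ≤ R.ncard + (oddCycleEdgeSetsWithin G (L ∪ R)).ncard := by
  induction L using WellFoundedLT.induction with
  | _ L ih =>
  by_cases hHall : ∀ Z ⊆ L, Z.ncard ≤ (nbhdSet G Z ∩ R).ncard
  · calc L.ncard ≤ (nbhdSet G L ∩ R).ncard := hHall L subset_rfl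
      _ ≤ R.ncard := ncard_le_ncard inter_subset_right
      _ ≤ _ := Nat.le_add_right _ _
  push Not at hHall
  obtain ⟨Z, ⟨hZL, hdef⟩, hZmin⟩ :=
    (toFinite {Z | Z ⊆ L ∧ (nbhdSet G Z ∩ R).ncard < Z.ncard}).exists_minimal hHall
  have hmin : ∀ W ⊂ Z, W.ncard ≤ (nbhdSet G W ∩ R).ncard := fun W hW =>
    not_lt.mp fun hWdef => hW.not_subset (hZmin ⟨hW.subset.trans hZL, hWdef⟩ hW.subset)
  obtain ⟨u, hu, c, hc, hodd, hsupp⟩ := exists_odd_isCycle_of_minimal_deficient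
    (hLR.mono_left hZL) (fun hZi => (hall Z hZL hZi).not_gt hdef) hdef hmin
  have huL := hZL hu
  have hLu := ih (L \ {u}) (sdiff_singleton_ssubset.mpr huL) (hLR.mono_left sdiff_subset)
    fun Z hZ => hall Z (hZ.trans sdiff_subset)
  have hXu : (L \ {u}) ∪ R = (L ∪ R) \ {u} := by
    rw [union_sdiff_distrib, sdiff_singleton_eq_self (disjoint_left.mp hLR huL)]
  rw [hXu] at hLu
  have hcycle := ncard_oddCycleEdgeSetsWithin_sdiff_singleton_lt (X := L ∪ R) c hc hodd
    fun x hx => (hsupp x hx).imp_left fun hx => hZL hx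
  have hcard := ncard_sdiff_singleton_add_one huL
  omega

end Hall

end

/-- For every finite simple graph `G`,
`|corona(G)| + |core(G)| ≤ 2·α(G) + k`, where `k` is the number of odd cycles of `G`. -/
theorem corona_core_le_two_alpha_add_numOddCycles (G : SimpleGraph V) :
    (coronaSet G).ncard + (coreSet G).ncard ≤ 2 * indepNum G + numOddCycles G := by
  obtain ⟨S, hS, hSα⟩ := exists_isMaxIndep_ncard_eq_indepNum G
  have hcore : coreSet G ⊆ S := sInter_subset_of_mem hS
  have hcorona : S ⊆ coronaSet G := subset_sUnion_of_mem hS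
  have hhall := ncard_le_ncard_add_ncard_oddCycleEdgeSetsWithin
    (disjoint_sdiff_left.mono_right sdiff_subset) fun _ => hS.ncard_le_ncard_nbhdSet_inter
  have hcycles :=
    ncard_oddCycleEdgeSetsWithin_le_numOddCycles G ((coronaSet G \ S) ∪ (S \ coreSet G))
  have hcorona_card := ncard_sdiff_add_ncard_of_subset hcorona
  have hcore_card := ncard_sdiff_add_ncard_of_subset hcore
  omega
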